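/- With notation as above, at any point with x ≠ 0 one has the bound |T_{Lβ}| ≤ C·T_{L0} for every index β = 0,1,2 and some absolute constant C (e.g. C = 4), where T_{Lβ} := T_{0β} - (x_j/|x|) T_{jβ}. -/

import Mathlib

/-- Minkowski signature on `ℝ^{1+2}`. -/
def minkSign3 : Fin 3 → ℝ := fun α => if α = 0 then -1 else 1

private lemma null_aux (l w u e f : ℝ) (hl0 : 0 ≤ l) (hw0 : 0 ≤ w)
    (hCS : u * u ≤ l * w) (hef : e ^ 2 + f ^ 2 = 1) :
    |f * u - e / 2 * l + e / 2 * w| ≤ 4 * ((l + w) / 2) := by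
  have hu1 : 2 * u ≤ l + w := by nlinarith [sq_nonneg (l - w)]
  have hu2 : -(l + w) ≤ 2 * u := by nlinarith [sq_nonneg (l - w)]
  have he1 : e ≤ 1 := by nlinarith [sq_nonneg f, sq_nonneg (e - 1)]
  have he2 : -1 ≤ e := by nlinarith [sq_nonneg f, sq_nonneg (e + 1)]
  have hf1 : f ≤ 1 := by nlinarith [sq_nonneg e, sq_nonneg (f - 1)]
  have hf2 : -1 ≤ f := by nlinarith [sq_nonneg e, sq_nonneg (f + 1)]
  rw [abs_le]
  constructor <;>
    nlinarith [mul_nonneg (by linarith : (0:ℝ) ≤ 1 - f) (by linarith : (0:ℝ) ≤ l + w + 2*u),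
      mul_nonneg (by linarith : (0:ℝ) ≤ 1 + f) (by linarith : (0:ℝ) ≤ l + w - 2*u),
      mul_nonneg (by linarith : (0:ℝ) ≤ 1 - f) (by linarith : (0:ℝ) ≤ l + w - 2*u),
      mul_nonneg (by linarith : (0:ℝ) ≤ 1 + f) (by linarith : (0:ℝ) ≤ l + w + 2*u),
      mul_nonneg (by linarith : (0:ℝ) ≤ 1 - e) hl0,
      mul_nonneg (by linarith : (0:ℝ) ≤ 1 + e) hl0,
      mul_nonneg (by linarith : (0:ℝ) ≤ 1 - e) hw0,
      mul_nonneg (by linarith : (0:ℝ) ≤ 1 + e) hw0]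

set_option maxHeartbeats 1600000 in
/-- At any point with `x ≠ 0`, the null components of the stress-energy tensor satisfy
`|T_{Lβ}| ≤ 4 T_{L0}` for every index `β`. -/
theorem null_stress_energy_bound {m : ℕ}
    (ψ : Fin 3 → EuclideanSpace ℝ (Fin m)) (x1 x2 r : ℝ)
    (hr : r = Real.sqrt (x1 ^ 2 + x2 ^ 2)) (hx : 0 < x1 ^ 2 + x2 ^ 2)
    (T : Fin 3 → Fin 3 → ℝ)
    (hT : ∀ α β, T α β =
      (inner ℝ (ψ α) (ψ β) : ℝ)
        - (1 / 2) * (if α = β then minkSign3 α else 0)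
            * ∑ γ, minkSign3 γ * (inner ℝ (ψ γ) (ψ γ) : ℝ)) :
    ∀ β, |T 0 β - (x1 / r) * T 1 β - (x2 / r) * T 2 β|
      ≤ 4 * (T 0 0 - (x1 / r) * T 1 0 - (x2 / r) * T 2 0) := by
  have hr0 : 0 < r := by
    rw [hr]; exact Real.sqrt_pos.mpr hx
  have hr2 : r ^ 2 = x1 ^ 2 + x2 ^ 2 := by
    rw [hr]; exact Real.sq_sqrt hx.le
  set e := x1 / r with he
  set f := x2 / r with hf
  have hef : e ^ 2 + f ^ 2 = 1 := by
    rw [he, hf]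
    field_simp
    linarith [hr2]
  set S := ∑ γ, minkSign3 γ * (inner ℝ (ψ γ) (ψ γ) : ℝ) with hSdef
  have m0 : minkSign3 0 = -1 := rfl
  have m1 : minkSign3 1 = 1 := rfl
  have m2 : minkSign3 2 = 1 := rfl
  have hSval : S = -(inner ℝ (ψ 0) (ψ 0) : ℝ) + (inner ℝ (ψ 1) (ψ 1) : ℝ)
      + (inner ℝ (ψ 2) (ψ 2) : ℝ) := by
    rw [hSdef, Fin.sum_univ_three, m0, m1, m2]; ring
  have t00 : T 0 0 = (inner ℝ (ψ 0) (ψ 0) : ℝ) + (1/2) * S := by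
    rw [hT 0 0, if_pos rfl, m0]; ring
  have t11 : T 1 1 = (inner ℝ (ψ 1) (ψ 1) : ℝ) - (1/2) * S := by
    rw [hT 1 1, if_pos rfl, m1]; ring
  have t22 : T 2 2 = (inner ℝ (ψ 2) (ψ 2) : ℝ) - (1/2) * S := by
    rw [hT 2 2, if_pos rfl, m2]; ring
  have t01 : T 0 1 = (inner ℝ (ψ 0) (ψ 1) : ℝ) := by
    rw [hT 0 1, if_neg (by decide)]; ring
  have t02 : T 0 2 = (inner ℝ (ψ 0) (ψ 2) : ℝ) := by
    rw [hT 0 2, if_neg (by decide)]; ring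
  have t10 : T 1 0 = (inner ℝ (ψ 0) (ψ 1) : ℝ) := by
    rw [hT 1 0, if_neg (by decide), real_inner_comm]; ring
  have t20 : T 2 0 = (inner ℝ (ψ 0) (ψ 2) : ℝ) := by
    rw [hT 2 0, if_neg (by decide), real_inner_comm]; ring
  have t12 : T 1 2 = (inner ℝ (ψ 1) (ψ 2) : ℝ) := by
    rw [hT 1 2, if_neg (by decide)]; ring
  have t21 : T 2 1 = (inner ℝ (ψ 1) (ψ 2) : ℝ) := by
    rw [hT 2 1, if_neg (by decide), real_inner_comm]; ring
  set L : EuclideanSpace ℝ (Fin m) := ψ 0 - e • ψ 1 - f • ψ 2 with hLdef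
  set P : EuclideanSpace ℝ (Fin m) := f • ψ 1 - e • ψ 2 with hPdef
  have hL : (inner ℝ L L : ℝ) =
      (inner ℝ (ψ 0) (ψ 0) : ℝ) - 2*e*(inner ℝ (ψ 0) (ψ 1) : ℝ) - 2*f*(inner ℝ (ψ 0) (ψ 2) : ℝ)
        + e^2*(inner ℝ (ψ 1) (ψ 1) : ℝ) + 2*e*f*(inner ℝ (ψ 1) (ψ 2) : ℝ)
        + f^2*(inner ℝ (ψ 2) (ψ 2) : ℝ) := by
    simp only [hLdef, inner_sub_left, inner_sub_right, real_inner_smul_left,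
      real_inner_smul_right]
    rw [real_inner_comm (ψ 1) (ψ 0), real_inner_comm (ψ 2) (ψ 0),
      real_inner_comm (ψ 2) (ψ 1)]
    ring
  have hP : (inner ℝ P P : ℝ) =
      f^2*(inner ℝ (ψ 1) (ψ 1) : ℝ) - 2*e*f*(inner ℝ (ψ 1) (ψ 2) : ℝ)
        + e^2*(inner ℝ (ψ 2) (ψ 2) : ℝ) := by
    simp only [hPdef, inner_sub_left, inner_sub_right, real_inner_smul_left,
      real_inner_smul_right]
    rw [real_inner_comm (ψ 2) (ψ 1)]
    ring
  have hLP : (inner ℝ L P : ℝ) =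
      f*(inner ℝ (ψ 0) (ψ 1) : ℝ) - e*(inner ℝ (ψ 0) (ψ 2) : ℝ)
        - e*f*(inner ℝ (ψ 1) (ψ 1) : ℝ) + (e^2 - f^2)*(inner ℝ (ψ 1) (ψ 2) : ℝ)
        + e*f*(inner ℝ (ψ 2) (ψ 2) : ℝ) := by
    simp only [hLdef, hPdef, inner_sub_left, inner_sub_right, real_inner_smul_left,
      real_inner_smul_right]
    rw [real_inner_comm (ψ 2) (ψ 1)]
    ring
  have hl0 : (0:ℝ) ≤ (inner ℝ L L : ℝ) := real_inner_self_nonneg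
  have hw0 : (0:ℝ) ≤ (inner ℝ P P : ℝ) := real_inner_self_nonneg
  have hCS : (inner ℝ L P : ℝ) * (inner ℝ L P : ℝ) ≤ (inner ℝ L L : ℝ) * (inner ℝ P P : ℝ) :=
    real_inner_mul_inner_self_le L P
  set l := (inner ℝ L L : ℝ) with hldef
  set w := (inner ℝ P P : ℝ) with hwdef
  set u := (inner ℝ L P : ℝ) with hudef
  have e0 : T 0 0 - e * T 1 0 - f * T 2 0 = (l + w) / 2 := by
    rw [t00, t10, t20, hSval, hL, hP]
    linear_combination (-(inner ℝ (ψ 1) (ψ 1) : ℝ)/2 - (inner ℝ (ψ 2) (ψ 2) : ℝ)/2) * hef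
  have e1 : T 0 1 - e * T 1 1 - f * T 2 1 =
      f * u - e/2 * l + e/2 * w := by
    rw [t01, t11, t21, hSval, hL, hP, hLP]
    linear_combination (-(inner ℝ (ψ 0) (ψ 1) : ℝ) + e/2*(inner ℝ (ψ 1) (ψ 1) : ℝ)
      + f*(inner ℝ (ψ 1) (ψ 2) : ℝ) - e/2*(inner ℝ (ψ 2) (ψ 2) : ℝ)) * hef
  have e2 : T 0 2 - e * T 1 2 - f * T 2 2 =
      -(e * u) - f/2 * l + f/2 * w := by
    rw [t02, t12, t22, hSval, hL, hP, hLP]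
    linear_combination (-(inner ℝ (ψ 0) (ψ 2) : ℝ) - f/2*(inner ℝ (ψ 1) (ψ 1) : ℝ)
      + e*(inner ℝ (ψ 1) (ψ 2) : ℝ) + f/2*(inner ℝ (ψ 2) (ψ 2) : ℝ)) * hef
  intro β
  fin_cases β
  · show |T 0 0 - e * T 1 0 - f * T 2 0| ≤ 4 * (T 0 0 - e * T 1 0 - f * T 2 0)
    rw [e0, abs_of_nonneg (by positivity)]
    linarith [hl0, hw0]
  · show |T 0 1 - e * T 1 1 - f * T 2 1| ≤ 4 * (T 0 0 - e * T 1 0 - f * T 2 0)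
    rw [e0, e1]
    exact null_aux l w u e f hl0 hw0 hCS hef
  · show |T 0 2 - e * T 1 2 - f * T 2 2| ≤ 4 * (T 0 0 - e * T 1 0 - f * T 2 0)
    rw [e0, e2]
    have hrw : -(e * u) - f/2 * l + f/2 * w = (-e) * u - f/2 * l + f/2 * w := by ring
    rw [hrw]
    exact null_aux l w u f (-e) hl0 hw0 hCS (by nlinarith [hef])
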